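/- arXiv:0711.0434 — 5 statements merged into one kernel-verified Lean document; each statement's English description precedes it below -/
import Mathlib

section
/- There exists a directed projective system of nonempty sets with surjective bonding maps whose projective limit is empty. -/
/-!
Take the finite subsets of `ℝ`, directed by inclusion, and over a finite set `s` the set of
injections `s ↪ ℕ`, with restriction as bonding maps. Each such set is nonempty and restriction
is surjective, since an injection of a finite set into `ℕ` extends to any larger finite set by
sending the new points outside its (finite) range. A point of the limit would be a compatible
family of injections; evaluating its component at `{a}` on `a` gives an injection `ℝ → ℕ`,
which cannot exist.
-/

namespace Function.Embedding

variable {α β : Type*}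

theorem nonempty_of_finite_of_infinite [Finite α] [Infinite β] : Nonempty (α ↪ β) :=
  ⟨(Finite.equivFin α).toEmbedding.trans (Fin.valEmbedding.trans (Infinite.natEmbedding β))⟩

theorem exists_extension_of_finite {p q : α → Prop} (hpq : ∀ x, p x → q x)
    [Finite {x // q x}] [Infinite β] (f : {x // p x} ↪ β) :
    ∃ g : {x // q x} ↪ β, (Subtype.impEmbedding p q hpq).trans g = f := by
  classical
  have : Finite {x // p x} := Finite.of_injective _ (Subtype.impEmbedding p q hpq).injective
  have : Infinite ((Set.range f)ᶜ : Set β) := (Set.finite_range f).infinite_compl.to_subtype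
  obtain ⟨e⟩ :=
    nonempty_of_finite_of_infinite (α := {x // q x}) (β := ((Set.range f)ᶜ : Set β))
  refine ⟨⟨fun y => if h : p y then f ⟨y, h⟩ else e y, fun y y' hyy' => ?_⟩,
    ext fun x => dif_pos x.2⟩
  by_cases hy : p y <;> by_cases hy' : p y' <;> simp only [hy, hy', dite_true, dite_false] at hyy'
  · exact Subtype.ext (Subtype.mk.inj (f.injective hyy'))
  · exact absurd ⟨_, hyy'⟩ (e y').2
  · exact absurd ⟨_, hyy'.symm⟩ (e y).2
  · exact e.injective (Subtype.ext hyy')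

end Function.Embedding

namespace Finset

variable {α β : Type*}

def restrictEmbedding {s t : Finset α} (h : s ⊆ t) (g : t ↪ β) : s ↪ β :=
  (Subtype.impEmbedding _ _ fun _ hx => h hx).trans g

theorem restrictEmbedding_surjective [Infinite β] {s t : Finset α} (h : s ⊆ t) :
    Function.Surjective (restrictEmbedding (β := β) h) :=
  Function.Embedding.exists_extension_of_finite _

def IsCompatibleEmbeddingFamily (x : ∀ s : Finset α, s ↪ β) : Prop :=
  ∀ ⦃s t : Finset α⦄ (h : s ⊆ t), restrictEmbedding h (x t) = x s

theorem IsCompatibleEmbeddingFamily.apply_eq_apply_singleton {x : ∀ s : Finset α, s ↪ β}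
    (hx : IsCompatibleEmbeddingFamily x) {s : Finset α} {a : α} (ha : a ∈ s) :
    x s ⟨a, ha⟩ = x {a} ⟨a, mem_singleton_self a⟩ :=
  congrArg (· ⟨a, mem_singleton_self a⟩) (hx (singleton_subset_iff.2 ha))

theorem IsCompatibleEmbeddingFamily.nonempty_embedding {x : ∀ s : Finset α, s ↪ β}
    (hx : IsCompatibleEmbeddingFamily x) : Nonempty (α ↪ β) := by
  classical
  refine ⟨⟨fun a => x {a} ⟨a, mem_singleton_self a⟩, fun a b hab => ?_⟩⟩
  have := (x {a, b}).injective <|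
    (hx.apply_eq_apply_singleton (mem_insert_self a {b})).trans <|
      hab.trans (hx.apply_eq_apply_singleton (mem_insert_of_mem (mem_singleton_self b))).symm
  exact congrArg Subtype.val this

end Finset

/-- There exists a directed projective system of nonempty sets with surjective
bonding maps whose projective limit is empty. -/
theorem stmt_2 :
    ∃ (D : Type) (r : D → D → Prop) (_ : Reflexive r) (htrans : Transitive r)
      (_ : ∀ d e : D, ∃ i, r d i ∧ r e i)
      (X : D → Type) (f : ∀ ⦃d e : D⦄, r d e → (X e → X d)),
        (∀ d (h : r d d), f h = id) ∧
        (∀ ⦃d e i : D⦄ (h₁ : r d e) (h₂ : r e i), f h₁ ∘ f h₂ = f (htrans h₁ h₂)) ∧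
        (∀ d, Nonempty (X d)) ∧
        (∀ ⦃d e : D⦄ (h : r d e), Function.Surjective (f h)) ∧
        IsEmpty {x : ∀ d, X d // ∀ ⦃d e : D⦄ (h : r d e), f h (x e) = x d} := by
  refine ⟨Finset ℝ, (· ⊆ ·), fun _ => Finset.Subset.refl _, fun _ _ _ => Finset.Subset.trans,
    fun d e => ⟨d ∪ e, Finset.subset_union_left, Finset.subset_union_right⟩,
    fun s => s ↪ ℕ, fun _ _ => Finset.restrictEmbedding,
    fun _ _ => rfl, fun _ _ _ _ _ => rfl,
    fun _ => Function.Embedding.nonempty_of_finite_of_infinite,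
    fun _ _ => Finset.restrictEmbedding_surjective, ⟨fun ⟨x, hx⟩ => ?_⟩⟩
  obtain ⟨e⟩ := Finset.IsCompatibleEmbeddingFamily.nonempty_embedding hx
  exact not_countable (α := ℝ) e.injective.countable
end

section
/- Let A be a complete linearly topologized ring such that A/I is Noetherian for every open ideal I (pro-Noetherian), and let J ⊆ A be an open ideal all of whose elements are topologically nilpotent. Then for every open ideal V of A there exists n ∈ ℕ with J^n ⊆ V. -/
/-!
Topological nilpotence puts `J` inside the radical of every open ideal `V`. Since `A ⧸ V` is
Noetherian, its nilradical is nilpotent, and pulling this back to `A` bounds a power of `J` by `V`.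
-/

open Filter

namespace Ideal

variable {R : Type*} [CommRing R]

theorem exists_pow_le_of_le_radical_of_isNoetherianRing_quotient {J V : Ideal R}
    [IsNoetherianRing (R ⧸ V)] (hJ : J ≤ V.radical) : ∃ n : ℕ, J ^ n ≤ V := by
  obtain ⟨n, hn⟩ := IsNoetherianRing.isNilpotent_nilradical (R ⧸ V)
  have hJ_nil : J.map (Quotient.mk V) ≤ nilradical (R ⧸ V) := by
    rwa [map_le_iff_le_comap, nilradical, comap_radical, zero_eq_bot, ← RingHom.ker_eq_comap_bot,
      mk_ker]
  refine ⟨n, ?_⟩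
  rw [← mk_ker (I := V), RingHom.ker_eq_comap_bot, ← map_le_iff_le_comap, Ideal.map_pow,
    ← zero_eq_bot, ← hn]
  exact pow_right_mono hJ_nil n

theorem le_radical_of_tendsto_pow_nhds_zero [TopologicalSpace R] {J V : Ideal R}
    (hV : (V : Set R) ∈ nhds (0 : R))
    (hJ : ∀ a ∈ J, Tendsto (fun n : ℕ => a ^ n) atTop (nhds 0)) : J ≤ V.radical :=
  fun a ha => ((hJ a ha).eventually_mem hV).exists

end Ideal

theorem stmt_7_general {A : Type*} [CommRing A] [UniformSpace A]
    (hNoeth : ∀ I : Ideal A, (I : Set A) ∈ nhds (0 : A) → IsNoetherianRing (A ⧸ I))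
    (J : Ideal A)
    (hJnil : ∀ a ∈ J, Tendsto (fun n : ℕ => a ^ n) atTop (nhds 0)) :
    ∀ V : Ideal A, (V : Set A) ∈ nhds (0 : A) → ∃ n : ℕ, J ^ n ≤ V := by
  intro V hV
  have := hNoeth V hV
  exact Ideal.exists_pow_le_of_le_radical_of_isNoetherianRing_quotient
    (Ideal.le_radical_of_tendsto_pow_nhds_zero hV hJnil)

/-- Let `A` be a complete linearly topologized ring such that `A ⧸ I` is
Noetherian for every open ideal `I` (pro-Noetherian), and let `J ⊆ A` be an
open ideal all of whose elements are topologically nilpotent.  Then for every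
open ideal `V` of `A` there exists `n ∈ ℕ` with `Jⁿ ⊆ V`. -/
theorem stmt_7 {A : Type*} [CommRing A] [UniformSpace A] [IsUniformAddGroup A]
    [IsTopologicalRing A] [CompleteSpace A]
    (hlin : ∀ s ∈ nhds (0 : A), ∃ I : Ideal A, (I : Set A) ∈ nhds (0 : A) ∧ (I : Set A) ⊆ s)
    (hNoeth : ∀ I : Ideal A, (I : Set A) ∈ nhds (0 : A) → IsNoetherianRing (A ⧸ I))
    (J : Ideal A) (hJopen : (J : Set A) ∈ nhds (0 : A))
    (hJnil : ∀ a ∈ J, Tendsto (fun n : ℕ => a ^ n) atTop (nhds 0)) :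
    ∀ V : Ideal A, (V : Set A) ∈ nhds (0 : A) → ∃ n : ℕ, J ^ n ≤ V :=
  stmt_7_general hNoeth J hJnil
end

section
/- Let A be a complete adic ring, with ideal I such that (I^n) is a basis of open ideals, and suppose A/I^n is Noetherian for all n. Then A is Noetherian, and for every ideal of definition J of A, the topology on A equals the J-adic topology. -/
/-!
If `I = (x₁, …, x_r)`, every element of `Iⁿ` is `p(x)` for a form `p` of degree `n` over `A`, and
the reductions mod `I` of the forms representing elements of an ideal `J` span an ideal of
`(A ⧸ I)[X₁, …, X_r]` (a presentation of `gr_I J`), which is finitely generated by Hilbert's basis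
theorem. Lifting a finite generating set to `b₁, …, b_s ∈ J`, every `a ∈ J ∩ Iⁿ` agrees with some
`∑ tⱼ bⱼ`, `tⱼ ∈ I^(n - deg bⱼ)`, modulo `I^(n+1)`; iterating and summing the resulting
`I`-adically convergent series shows `J = (b₁, …, b_s)`. The same approximation argument, with
`I ⊆ (x) + I²`, shows that `I` itself is finitely generated once `I ⧸ I²` is.
-/

open MvPolynomial

section

variable {A : Type*} [CommRing A]

namespace MvPolynomial

variable {σ : Type*}

theorem IsHomogeneous.eval_mem_mul_pow {p : MvPolynomial σ A} {n : ℕ} (hp : p.IsHomogeneous n)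
    {I K : Ideal A} {x : σ → A} (hx : ∀ i, x i ∈ I) (hK : ∀ d, coeff d p ∈ K) :
    eval x p ∈ K * I ^ n := by
  have hspan : Ideal.span (Set.range x) ^ n ≤ I ^ n :=
    Ideal.pow_right_mono (Ideal.span_le.2 (Set.range_subset_iff.2 hx)) n
  rw [p.as_sum, map_sum]
  refine Ideal.sum_mem _ fun d hd => ?_
  rw [← mul_one (coeff d p), ← C_mul_monomial, map_mul, eval_C]
  refine Ideal.mul_mem_mul (hK d) (hspan ((Ideal.mem_span_pow_iff_exists_isHomogeneous x _).2
    ⟨_, isHomogeneous_monomial _ ?_, rfl⟩))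
  rw [Finsupp.degree_eq_weight_one]
  exact hp (mem_support_iff.1 hd)

attribute [local instance] gradedAlgebra in
theorem homogeneousComponent_mul_of_isHomogeneous {R : Type*} [CommSemiring R]
    {q : MvPolynomial σ R} {i : ℕ} (hq : q.IsHomogeneous i) (p : MvPolynomial σ R) (n : ℕ) :
    homogeneousComponent n (p * q) =
      if i ≤ n then homogeneousComponent (n - i) p * q else 0 := by
  classical
  simpa only [← DirectSum.Decomposition.decompose'_eq, decomposition.decompose'_apply] using
    DirectSum.coe_decompose_mul_of_right_mem (𝒜 := homogeneousSubmodule σ R) n (a := p) hq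

theorem exists_sub_sum_mem_pow_succ_of_map_mem_span {ι : Type*} [Fintype ι] {I : Ideal A}
    {x : σ → A} (hx : ∀ i, x i ∈ I) {P : ι → MvPolynomial σ A} {d : ι → ℕ}
    (hP : ∀ j, (P j).IsHomogeneous (d j)) {p : MvPolynomial σ A} {n : ℕ}
    (hp : p.IsHomogeneous n)
    (hmem : map (Ideal.Quotient.mk I) p ∈
      Ideal.span (Set.range fun j => map (Ideal.Quotient.mk I) (P j))) :
    ∃ t : ι → A, (∀ j, t j ∈ I ^ (n - d j)) ∧ eval x p - ∑ j, t j * eval x (P j) ∈ I ^ (n + 1) := by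
  classical
  obtain ⟨c, hc⟩ := Ideal.mem_span_range_iff_exists_fun.1 hmem
  choose h hh using fun j => map_surjective _ Ideal.Quotient.mk_surjective (c j)
  -- `E` vanishes mod `I`; evaluating its degree-`n` component gives `eval x p - ∑ⱼ tⱼ eval x (P j)`.
  set E := p - ∑ j, h j * P j
  have hE : ∀ m, coeff m (homogeneousComponent n E) ∈ I := by
    have hmap : map (Ideal.Quotient.mk I) E = 0 := by
      simp [E, map_sub, map_sum, hh, hc]
    intro m
    rw [coeff_homogeneousComponent]
    split_ifs
    · rw [← Ideal.Quotient.eq_zero_iff_mem, ← coeff_map, hmap, coeff_zero]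
    · exact I.zero_mem
  refine ⟨fun j => if d j ≤ n then eval x (homogeneousComponent (n - d j) (h j)) else 0,
    fun j => ?_, ?_⟩
  · dsimp only
    split_ifs
    · simpa using (homogeneousComponent_isHomogeneous _ _).eval_mem_mul_pow hx
        (K := ⊤) fun _ => Submodule.mem_top
    · exact Submodule.zero_mem _
  · have := (homogeneousComponent_isHomogeneous n E).eval_mem_mul_pow hx hE
    rw [← pow_succ'] at this
    convert this using 1
    simp [E, map_sub, map_sum, homogeneousComponent_eq_self hp,
      homogeneousComponent_mul_of_isHomogeneous (hP _), apply_ite, ite_mul]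

end MvPolynomial

variable (I : Ideal A)

theorem IsPrecomplete.exists_sub_sum_range_mem_pow [IsPrecomplete I A] {u : ℕ → A} {d : ℕ}
    (hu : ∀ k, u k ∈ I ^ (k - d)) :
    ∃ L, ∀ n, L - ∑ k ∈ Finset.range n, u k ∈ I ^ (n - d) := by
  have htail : ∀ m n, m ≤ n → ∑ k ∈ Finset.Ico m n, u k ∈ I ^ (m - d) := fun m n _ =>
    Ideal.sum_mem _ fun k hk =>
      Ideal.pow_le_pow_right (Nat.sub_le_sub_right (Finset.mem_Ico.1 hk).1 d) (hu k)
  obtain ⟨L, hL⟩ := IsPrecomplete.prec ‹_› (f := fun n => ∑ k ∈ Finset.range (n + d), u k)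
    fun {m n} hmn => by
      rw [SModEq.sub_mem, smul_eq_mul, Ideal.mul_top, ← neg_mem_iff, neg_sub,
        ← Finset.sum_range_add_sum_Ico _ (by omega : m + d ≤ n + d), add_sub_cancel_left]
      simpa using htail (m + d) (n + d) (by omega)
  refine ⟨L, fun n => ?_⟩
  obtain hnd | hdn := le_total n d
  · simp [Nat.sub_eq_zero_of_le hnd]
  · have := hL (n - d)
    rw [SModEq.sub_mem, smul_eq_mul, Ideal.mul_top, Nat.sub_add_cancel hdn] at this
    rw [← neg_mem_iff, neg_sub]
    exact this

theorem exists_partial_sums_of_forall_exists_sub_sum_mem {ι : Type*} [Fintype ι] {J : Ideal A}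
    {b : ι → A} (hb : ∀ j, b j ∈ J) (d : ι → ℕ)
    (happrox : ∀ n, ∀ a ∈ J, a ∈ I ^ n →
      ∃ t : ι → A, (∀ j, t j ∈ I ^ (n - d j)) ∧ a - ∑ j, t j * b j ∈ I ^ (n + 1))
    {a : A} (ha : a ∈ J) :
    ∃ c : ℕ → ι → A, (∀ k j, c k j ∈ I ^ (k - d j)) ∧
      ∀ n, a - ∑ j, (∑ k ∈ Finset.range n, c k j) * b j ∈ I ^ n := by
  classical
  have happrox' : ∀ n a, ∃ t : ι → A, a ∈ J → a ∈ I ^ n →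
      (∀ j, t j ∈ I ^ (n - d j)) ∧ a - ∑ j, t j * b j ∈ I ^ (n + 1) := by
    intro n a
    by_cases h : a ∈ J ∧ a ∈ I ^ n
    · obtain ⟨t, ht⟩ := happrox n a h.1 h.2
      exact ⟨t, fun _ _ => ht⟩
    · exact ⟨0, fun h₁ h₂ => absurd ⟨h₁, h₂⟩ h⟩
  choose T hT using happrox'
  let r : ℕ → A := fun n => Nat.rec a (fun k c => c - ∑ j, T k c j * b j) n
  have hr : ∀ n, r n ∈ J ∧ r n ∈ I ^ n := by
    intro n
    induction n with
    | zero => simpa [r] using ha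
    | succ n ih =>
      exact ⟨J.sub_mem ih.1 (J.sum_mem fun j _ => J.mul_mem_left _ (hb j)),
        (hT n (r n) ih.1 ih.2).2⟩
  refine ⟨fun k => T k (r k), fun k => (hT k (r k) (hr k).1 (hr k).2).1, fun n => ?_⟩
  suffices a - ∑ j, (∑ k ∈ Finset.range n, T k (r k) j) * b j = r n from this ▸ (hr n).2
  induction n with
  | zero => simp [r]
  | succ n ih =>
    simp only [Finset.sum_range_succ, add_mul, Finset.sum_add_distrib]
    rw [← sub_sub, ih]

theorem IsAdicComplete.eq_span_of_forall_exists_sub_sum_mem [IsAdicComplete I A] {ι : Type*}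
    [Fintype ι] {J : Ideal A} {b : ι → A} (hb : ∀ j, b j ∈ J) (d : ι → ℕ)
    (happrox : ∀ n, ∀ a ∈ J, a ∈ I ^ n →
      ∃ t : ι → A, (∀ j, t j ∈ I ^ (n - d j)) ∧ a - ∑ j, t j * b j ∈ I ^ (n + 1)) :
    J = Ideal.span (Set.range b) := by
  refine le_antisymm (fun a ha => ?_) (Ideal.span_le.2 (Set.range_subset_iff.2 hb))
  obtain ⟨c, hc, hsum⟩ := exists_partial_sums_of_forall_exists_sub_sum_mem I hb d happrox ha
  choose L hL using fun j => IsPrecomplete.exists_sub_sum_range_mem_pow I (hc · j)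
  suffices a = ∑ j, L j * b j from
    this ▸ Ideal.sum_mem _ fun j _ => Ideal.mul_mem_left _ _ (Ideal.subset_span ⟨j, rfl⟩)
  refine (IsHausdorff.eq_iff_smodEq (I := I)).2 fun n => ?_
  rw [SModEq.sub_mem, smul_eq_mul, Ideal.mul_top]
  let N := n + Finset.univ.sup d
  have hdN : ∀ j, n ≤ N - d j := fun j => by
    have := Finset.le_sup (f := d) (Finset.mem_univ j); omega
  have hsplit : a - ∑ j, L j * b j = (a - ∑ j, (∑ k ∈ Finset.range N, c k j) * b j) -
      ∑ j, (L j - ∑ k ∈ Finset.range N, c k j) * b j := by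
    simp only [sub_mul, Finset.sum_sub_distrib]; ring
  rw [hsplit]
  exact Ideal.sub_mem _ (Ideal.pow_le_pow_right (by omega) (hsum N))
    (Ideal.sum_mem _ fun j _ => Ideal.mul_mem_right _ _ (Ideal.pow_le_pow_right (hdN j) (hL j N)))

theorem IsAdicComplete.eq_span_of_le_span_sup_sq [IsAdicComplete I A] {ι : Type*} [Fintype ι]
    {x : ι → A} (hx : ∀ i, x i ∈ I) (hle : I ≤ Ideal.span (Set.range x) ⊔ I ^ 2) :
    I = Ideal.span (Set.range x) := by
  refine IsAdicComplete.eq_span_of_forall_exists_sub_sum_mem I hx (fun _ => 1) fun n a haI ha => ?_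
  cases n with
  | zero => exact ⟨0, by simp, by simpa using haI⟩
  | succ m =>
    have hmem : a ∈ I ^ m • Ideal.span (Set.range x) ⊔ I ^ (m + 2) := by
      have := Ideal.mul_mono_right hle (pow_succ I m ▸ ha)
      rwa [Submodule.mul_sup, ← pow_add] at this
    obtain ⟨y, hy, z, hz, rfl⟩ := Submodule.mem_sup.1 hmem
    obtain ⟨t, ht, rfl⟩ := (Submodule.mem_ideal_smul_span_iff_exists_sum _ x y).1 hy
    refine ⟨t, fun j => by simpa using ht j, ?_⟩
    simpa [Finsupp.sum_fintype] using hz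

theorem IsAdicComplete.fg_of_fg_map_quotient_sq [IsAdicComplete I A]
    (h : (I.map (Ideal.Quotient.mk (I ^ 2))).FG) : I.FG := by
  obtain ⟨r, g, hg⟩ := Submodule.fg_iff_exists_fin_generating_family.1 h
  have hlift : ∀ i, ∃ y ∈ I, Ideal.Quotient.mk (I ^ 2) y = g i := fun i =>
    (Ideal.mem_map_iff_of_surjective _ Ideal.Quotient.mk_surjective).1
      (hg ▸ Ideal.subset_span ⟨i, rfl⟩)
  choose x hxI hx using hlift
  have hmap : (Ideal.span (Set.range x)).map (Ideal.Quotient.mk (I ^ 2)) =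
      I.map (Ideal.Quotient.mk (I ^ 2)) := by
    rw [Ideal.map_span, ← Set.range_comp, ← hg]
    simp [Function.comp_def, hx]
  have hle : I ≤ Ideal.span (Set.range x) ⊔ I ^ 2 := by
    calc I ≤ (I.map (Ideal.Quotient.mk (I ^ 2))).comap (Ideal.Quotient.mk (I ^ 2)) :=
          Ideal.le_comap_map
      _ = _ := by
        rw [← hmap, Ideal.comap_map_of_surjective' _ Ideal.Quotient.mk_surjective, Ideal.mk_ker]
  rw [IsAdicComplete.eq_span_of_le_span_sup_sq I hxI hle]
  exact Submodule.fg_span (Set.finite_range x)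

theorem IsAdicComplete.isNoetherianRing [IsAdicComplete I A] [IsNoetherianRing (A ⧸ I)]
    (hI : I.FG) : IsNoetherianRing A := by
  obtain ⟨r, x, hIx⟩ := Submodule.fg_iff_exists_fin_generating_family.1 hI
  have hx : ∀ i, x i ∈ I := fun i => hIx ▸ Ideal.subset_span ⟨i, rfl⟩
  refine (isNoetherianRing_iff_ideal_fg A).2 fun J => ?_
  set S : Set (MvPolynomial (Fin r) (A ⧸ I)) :=
    {q | ∃ n p, p.IsHomogeneous n ∧ eval x p ∈ J ∧ map (Ideal.Quotient.mk I) p = q}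
  obtain ⟨t, htS, hspan⟩ :=
    (Submodule.fg_span_iff_fg_span_finset_subset S).1 (IsNoetherian.noetherian (Ideal.span S))
  choose d P hP hPJ hPt using fun q : t => htS q.2
  rw [IsAdicComplete.eq_span_of_forall_exists_sub_sum_mem I hPJ d fun n a haJ ha => ?_]
  · exact Submodule.fg_span (Set.finite_range _)
  obtain ⟨p, hp, rfl⟩ := (Ideal.mem_span_pow_iff_exists_isHomogeneous x a).1 (hIx ▸ ha)
  refine exists_sub_sum_mem_pow_succ_of_map_mem_span hx hP hp ?_
  have hrange : (Set.range fun q : t => map (Ideal.Quotient.mk I) (P q)) = t := by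
    simp [hPt]
  rw [hrange, Ideal.span, ← hspan]
  exact Ideal.subset_span ⟨n, p, hp, haJ, rfl⟩

end

/-- Let `A` be a complete adic ring, with ideal `I` such that `(Iⁿ)` is a basis
of open ideals, and suppose `A ⧸ Iⁿ` is Noetherian for all `n`.  Then `A` is
Noetherian, and for every ideal of definition `J` of `A` (an open ideal all of
whose elements are topologically nilpotent), the topology of `A` equals the
`J`-adic topology, i.e. the filtrations `(Iⁿ)` and `(Jⁿ)` are mutually
cofinal. -/
theorem stmt_8 {A : Type*} [CommRing A] (I : Ideal A) [IsAdicComplete I A]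
    (hNoeth : ∀ n : ℕ, IsNoetherianRing (A ⧸ I ^ n)) :
    IsNoetherianRing A ∧
    ∀ J : Ideal A,
      (∃ n : ℕ, I ^ n ≤ J) →
      (∀ a ∈ J, ∀ n : ℕ, ∃ m : ℕ, a ^ m ∈ I ^ n) →
      (∀ n : ℕ, ∃ m : ℕ, J ^ m ≤ I ^ n) ∧ (∀ n : ℕ, ∃ m : ℕ, I ^ m ≤ J ^ n) := by
  have : IsNoetherianRing (A ⧸ I) := by
    have := hNoeth 1
    rwa [pow_one] at this
  have hIfg : I.FG := IsAdicComplete.fg_of_fg_map_quotient_sq I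
    ((isNoetherianRing_iff_ideal_fg _).1 (hNoeth 2) _)
  have hA : IsNoetherianRing A := IsAdicComplete.isNoetherianRing I hIfg
  refine ⟨hA, fun J ⟨k, hk⟩ hnil => ⟨fun n => ?_, fun n => ⟨k * n, ?_⟩⟩⟩
  · have hrad : J ≤ (I ^ n).radical := fun a ha => Ideal.mem_radical_iff.2 (hnil a ha n)
    exact Ideal.exists_pow_le_of_le_radical_of_fg hrad (IsNoetherian.noetherian J)
  · rw [pow_mul]
    exact Ideal.pow_right_mono hk n
end

section
/- Let (A, 𝔪) be a Noetherian complete local ring with the 𝔪-adic topology, and let (I_d) be a directed family of ideals with ⋂_d I_d = 0 such that each I_d is open in the 𝔪-adic topology. Then the (I_d)-topology coincides with the 𝔪-adic topology: for every n there exists d with I_d ⊆ 𝔪^n. -/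
/-!
Let `S k = ⋂_d (I_d + 𝔪^k)`. Since `A/𝔪^k` is Artinian and the family is directed, the images of
the `I_d` in `A/𝔪^k` have a least element, so `S k = I_{e k} + 𝔪^k` for some index `e k`; in
particular `S k ⊆ S (k+1) + 𝔪^k`. By completeness every element of `S n` is, modulo `𝔪^n`, the limit
of a Cauchy sequence `x_j ∈ S (n+j)`, and this limit lies in `⋂_k S k`. Openness gives
`⋂_k S k ⊆ ⋂_d I_d = 0`, hence `I_{e n} ⊆ S n ⊆ 𝔪^n`.
-/

open IsLocalRing

theorem Directed.exists_forall_le_of_wellFoundedLT {α ι : Type*} [PartialOrder α]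
    [WellFoundedLT α] [Nonempty ι] {f : ι → α} (hf : Directed (· ≥ ·) f) : ∃ i, ∀ j, f i ≤ f j := by
  obtain ⟨_, hmin⟩ := WellFoundedLT.exists_minimal ‹_› (Set.range f) (Set.range_nonempty f)
  obtain ⟨i, rfl⟩ := hmin.1
  exact ⟨i, fun j ↦ hf.directedOn_range.le_of_minimal hmin ⟨j, rfl⟩⟩

namespace Submodule

variable {R M : Type*} [CommRing R] [AddCommGroup M] [Module R M]

theorem exists_le_iInf_sup_of_isArtinian_quotient {ι : Type*} [Nonempty ι] {N : Submodule R M}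
    [IsArtinian R (M ⧸ N)] {p : ι → Submodule R M} (hp : Directed (· ≥ ·) p) :
    ∃ e, p e ≤ ⨅ d, p d ⊔ N := by
  have hmap : Directed (· ≥ ·) (map N.mkQ ∘ p) :=
    hp.mono_comp (· ≥ ·) (rb := (· ≥ ·)) fun _ _ h ↦ map_mono h
  obtain ⟨e, he⟩ := hmap.exists_forall_le_of_wellFoundedLT
  refine ⟨e, le_iInf fun d ↦ ?_⟩
  rw [sup_comm, ← comap_map_mkQ]
  exact (le_comap_map _ _).trans (comap_mono (he d))

theorem exists_seq_of_le_sup (S N : ℕ → Submodule R M) (h : ∀ k, S k ≤ S (k + 1) ⊔ N k)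
    {a : M} (ha : a ∈ S 0) :
    ∃ x : ℕ → M, x 0 = a ∧ (∀ k, x k ∈ S k) ∧ ∀ k, x k - x (k + 1) ∈ N k := by
  have step (k : ℕ) (y : S k) : ∃ z : S (k + 1), (y : M) - z ∈ N k := by
    obtain ⟨z, hz, w, hw, hzw⟩ := mem_sup.mp (h k y.2)
    exact ⟨⟨z, hz⟩, by rwa [← hzw, add_sub_cancel_left]⟩
  choose next hnext using step
  let y (k : ℕ) : S k := Nat.rec ⟨a, ha⟩ next k
  exact ⟨fun k ↦ (y k).1, rfl, fun k ↦ (y k).2, fun k ↦ hnext k (y k)⟩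

theorem sub_mem_of_forall_sub_succ_mem {N : ℕ → Submodule R M} (hN : Antitone N) {x : ℕ → M}
    (hx : ∀ k, x k - x (k + 1) ∈ N k) {i j : ℕ} (hij : i ≤ j) : x i - x j ∈ N i := by
  induction j, hij using Nat.le_induction with
  | base => simp
  | succ j hij ih => simpa using add_mem ih (hN hij (hx j))

end Submodule

namespace IsPrecomplete

open Submodule

variable {R M : Type*} [CommRing R] [AddCommGroup M] [Module R M] {I : Ideal R}
  [IsPrecomplete I M]

theorem exists_sub_mem_pow_smul_top (n : ℕ) {x : ℕ → M}
    (hx : ∀ k, x k - x (k + 1) ∈ I ^ (n + k) • (⊤ : Submodule R M)) :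
    ∃ L, ∀ k, x k - L ∈ I ^ (n + k) • (⊤ : Submodule R M) := by
  have htel {i j : ℕ} (hij : i ≤ j) : x i - x j ∈ I ^ (n + i) • (⊤ : Submodule R M) :=
    sub_mem_of_forall_sub_succ_mem (fun _ _ h ↦ pow_smul_top_le I M (by omega)) hx hij
  obtain ⟨L, hL⟩ := IsPrecomplete.prec ‹_› (f := x) fun hij ↦
    SModEq.sub_mem.mpr (pow_smul_top_le I M (by omega) (htel hij))
  refine ⟨L, fun k ↦ ?_⟩
  have hLk : x (k + n) - L ∈ I ^ (n + k) • (⊤ : Submodule R M) :=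
    pow_smul_top_le I M (by omega) (SModEq.sub_mem.mp (hL (k + n)))
  simpa using add_mem (htel (k.le_add_right n)) hLk

theorem le_iInf_sup_pow_smul_top {S : ℕ → Submodule R M} (hS : Antitone S)
    (hpow : ∀ k, I ^ k • ⊤ ≤ S k) (hstep : ∀ k, S k ≤ S (k + 1) ⊔ I ^ k • ⊤) (n : ℕ) :
    S n ≤ (⨅ k, S k) ⊔ I ^ n • ⊤ := by
  intro a ha
  obtain ⟨x, rfl, hxS, hx⟩ := exists_seq_of_le_sup (fun k ↦ S (n + k)) (fun k ↦ I ^ (n + k) • ⊤)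
    (fun k ↦ hstep (n + k)) ha
  obtain ⟨L, hL⟩ := exists_sub_mem_pow_smul_top n hx
  have hLS : L ∈ ⨅ k, S k := mem_iInf _ |>.mpr fun k ↦
    hS (k.le_add_left n) (by simpa using sub_mem (hxS k) (hpow _ (hL k)))
  exact mem_sup.mpr ⟨L, hLS, x 0 - L, hL 0, add_sub_cancel L (x 0)⟩

theorem exists_le_pow_smul_top_of_directed
    [∀ k, IsArtinian R (M ⧸ I ^ k • (⊤ : Submodule R M))] {ι : Type*} [Nonempty ι]
    {p : ι → Submodule R M} (hdir : Directed (· ≥ ·) p)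
    (hbot : ⨅ d, p d = ⊥) (hopen : ∀ d, ∃ m, I ^ m • ⊤ ≤ p d) (n : ℕ) :
    ∃ d, p d ≤ I ^ n • ⊤ := by
  set S : ℕ → Submodule R M := fun k ↦ ⨅ d, p d ⊔ I ^ k • ⊤
  choose e he using fun k ↦ exists_le_iInf_sup_of_isArtinian_quotient (N := I ^ k • ⊤) hdir
  have hS : Antitone S := fun i j h ↦ iInf_mono fun d ↦ sup_le_sup_left (pow_smul_top_le I M h) _
  have hpow (k : ℕ) : I ^ k • ⊤ ≤ S k := le_iInf fun d ↦ le_sup_right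
  have hstep (k : ℕ) : S k ≤ S (k + 1) ⊔ I ^ k • ⊤ :=
    (iInf_le _ (e (k + 1))).trans (sup_le_sup_right (he (k + 1)) _)
  have hinf : ⨅ k, S k = ⊥ := eq_bot_iff.mpr <| hbot ▸ le_iInf fun d ↦ by
    obtain ⟨m, hm⟩ := hopen d
    exact (iInf_le S m).trans ((iInf_le _ d).trans (sup_le le_rfl hm))
  refine ⟨e n, (he n).trans ?_⟩
  simpa [hinf] using le_iInf_sup_pow_smul_top hS hpow hstep n

end IsPrecomplete

theorem IsLocalRing.isArtinianRing_quotient_maximalIdeal_pow {A : Type*} [CommRing A]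
    [IsNoetherianRing A] [IsLocalRing A] (k : ℕ) : IsArtinianRing (A ⧸ maximalIdeal A ^ k) := by
  rcases k.eq_zero_or_pos with rfl | hk
  · rw [pow_zero, Ideal.one_eq_top]
    infer_instance
  · apply quotient_artinian_of_mem_minimalPrimes_of_isLocalRing
    rw [← Ideal.radical_minimalPrimes, Ideal.radical_pow _ hk.ne',
      (maximalIdeal.isMaximal A).isPrime.radical,
      Ideal.minimalPrimes_eq_subsingleton_self]
    rfl

/-- Let `(A, 𝔪)` be a Noetherian complete local ring with the `𝔪`-adic
topology, and `(I d)` a directed family of ideals with `⋂ I d = 0` such that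
each `I d` is open in the `𝔪`-adic topology.  Then the `(I d)`-topology
coincides with the `𝔪`-adic topology: for every `n` there exists `d` with
`I d ⊆ 𝔪ⁿ`. -/
theorem stmt_10 {A : Type*} [CommRing A] [IsNoetherianRing A] [IsLocalRing A]
    [IsAdicComplete (maximalIdeal A) A]
    {ι : Type*} [Nonempty ι] (I : ι → Ideal A)
    (hdir : ∀ d e : ι, ∃ c, I c ≤ I d ∧ I c ≤ I e)
    (hinter : (⨅ d, I d) = ⊥)
    (hopen : ∀ d, ∃ m : ℕ, maximalIdeal A ^ m ≤ I d) :
    ∀ n : ℕ, ∃ d, I d ≤ maximalIdeal A ^ n := by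
  have hsmul (k : ℕ) : (maximalIdeal A ^ k • ⊤ : Ideal A) = maximalIdeal A ^ k := by
    rw [smul_eq_mul, Ideal.mul_top]
  have (k : ℕ) : IsArtinian A (A ⧸ maximalIdeal A ^ k • (⊤ : Ideal A)) := by
    rw [hsmul]
    have := isArtinianRing_quotient_maximalIdeal_pow (A := A) k
    exact isArtinian_of_surjective_algebraMap
      (Ideal.Quotient.mk_surjective (I := maximalIdeal A ^ k))
  simpa only [hsmul] using IsPrecomplete.exists_le_pow_smul_top_of_directed
    (I := maximalIdeal A) (M := A) hdir hinter (by simpa only [hsmul] using hopen)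
end

section
/- Let ω be an algebraic Pfaff form of degree m on ℙ²_ℂ, i.e. ω = ω₁ dx + ω₂ dy + ω₃ dz with ωᵢ homogeneous of degree m and xω₁ + yω₂ + zω₃ = 0. If f ∈ ℂ[[x,y,z]] is nonzero with lowest-degree homogeneous part f_n, and f divides ω ∧ df in the module of formal differential forms, then f_n divides ω ∧ df_n, i.e. the class of f_n is an algebraic solution of ω. -/
/-!
Write `ω ∧ df = f h` componentwise. Each `ωᵢ ∂ⱼ f` has order at least `m + n - 1`, with
component `ωᵢ ∂ⱼ fₙ` in that degree. Since `ℂ[[x,y,z]]` is a domain, `ord (f h) = n + ord h`,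
so `h` has order at least `m - 1`, and comparing the components of degree `m + n - 1` gives
`ω ∧ dfₙ = fₙ h_{m-1}` (for `m = 0` both sides vanish). The cofactor `h_{m-1}` is
homogeneous, hence a polynomial.
-/

open MvPolynomial

noncomputable def mvpsPDeriv {σ : Type*} {R : Type*} [CommRing R] (i : σ)
    (f : MvPowerSeries σ R) : MvPowerSeries σ R :=
  fun s => ((s i + 1 : ℕ) : R) * f (s + Finsupp.single i 1)

theorem mvpsPDeriv_eq_pderiv {σ R : Type*} [CommRing R] (i : σ) (f : MvPowerSeries σ R) :
    mvpsPDeriv i f = MvPowerSeries.pderiv R i f := by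
  ext s
  rw [MvPowerSeries.coeff_pderiv, mul_comm, ← Nat.cast_succ]
  rfl

theorem MvPolynomial.IsHomogeneous.coe {σ R : Type*} [CommSemiring R] {w : MvPolynomial σ R}
    {m : ℕ} (hw : w.IsHomogeneous m) : (w : MvPowerSeries σ R).IsHomogeneous m :=
  fun hd => hw hd

namespace MvPowerSeries

open Finsupp

variable {σ R : Type*}

section CommSemiring

variable [CommSemiring R]

theorem IsHomogeneous.le_order {f : MvPowerSeries σ R} {p : ℕ} (hf : f.IsHomogeneous p) :
    (p : ℕ∞) ≤ f.order :=
  nat_le_order fun _ hd => hf.coeff_eq_zero hd.ne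

theorem coe_truncTotal_of_isHomogeneous [Finite σ] {f : MvPowerSeries σ R} {p : ℕ}
    (hf : f.IsHomogeneous p) : (truncTotal (p + 1) f : MvPowerSeries σ R) = f := by
  ext d
  rw [MvPolynomial.coeff_coe, coeff_truncTotal_eq_ite]
  split_ifs with hd
  · rfl
  · exact (hf.coeff_eq_zero (by omega)).symm

theorem le_order_pderiv {f : MvPowerSeries σ R} {q : ℕ} (i : σ) (hf : (q + 1 : ℕ) ≤ f.order) :
    q ≤ (pderiv R i f).order :=
  nat_le_order fun d hd => by
    rw [coeff_pderiv, coeff_of_lt_order, zero_mul]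
    rw [map_add, degree_single]
    exact (Nat.cast_lt.mpr (Nat.succ_lt_succ hd)).trans_le hf

theorem homogeneousComponent_pderiv (i : σ) (q : ℕ) (f : MvPowerSeries σ R) :
    homogeneousComponent q (pderiv R i f) = pderiv R i (homogeneousComponent (q + 1) f) := by
  ext d
  simp only [coeff_homogeneousComponent, coeff_pderiv, map_add, degree_single,
    Nat.add_right_cancel_iff, ite_mul, zero_mul]

theorem le_order_coe_mul_pderiv {w : MvPolynomial σ R} {m q : ℕ} (hw : w.IsHomogeneous m)
    {f : MvPowerSeries σ R} (hf : (q + 1 : ℕ) ≤ f.order) (i : σ) :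
    ((m + q : ℕ) : ℕ∞) ≤ ((w : MvPowerSeries σ R) * pderiv R i f).order := by
  rw [Nat.cast_add]
  exact (add_le_add (IsHomogeneous.le_order hw.coe) (le_order_pderiv i hf)).trans le_order_mul

theorem homogeneousComponent_coe_mul_pderiv {w : MvPolynomial σ R} {m q : ℕ}
    (hw : w.IsHomogeneous m) {f : MvPowerSeries σ R} (hf : (q + 1 : ℕ) ≤ f.order) (i : σ) :
    homogeneousComponent (m + q) ((w : MvPowerSeries σ R) * pderiv R i f) =
      w * pderiv R i (homogeneousComponent (q + 1) f) := by
  rw [homogeneousComponent_mul_of_le_order (IsHomogeneous.le_order hw.coe)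
    (le_order_pderiv i hf), ← isHomogeneous_iff_eq_homogeneousComponent.mp hw.coe,
    homogeneousComponent_pderiv]

end CommSemiring

theorem le_order_sub [CommRing R] {f g : MvPowerSeries σ R} {n : ℕ∞} (hf : n ≤ f.order)
    (hg : n ≤ g.order) : n ≤ (f - g).order := by
  rw [sub_eq_add_neg]
  exact (le_min hf (by rwa [order_neg])).trans min_order_le_add

theorem exists_isHomogeneous_homogeneousComponent_eq_mul_of_dvd [CommSemiring R]
    [NoZeroDivisors R] {F G : MvPowerSeries σ R} {n k : ℕ} (hdvd : F ∣ G) (hF : n ≤ F.order)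
    (hFn : homogeneousComponent n F ≠ 0) (hG : k ≤ G.order) :
    ∃ H : MvPowerSeries σ R, H.IsHomogeneous (k - n) ∧
      homogeneousComponent k G = homogeneousComponent n F * H := by
  obtain ⟨H, rfl⟩ := hdvd
  rcases lt_or_ge k n with hkn | hnk
  · refine ⟨0, fun hd => (hd (map_zero _)).elim, ?_⟩
    rw [mul_zero]
    exact homogeneousComponent_of_lt_order_eq_zero
      ((Nat.cast_lt.mpr hkn).trans_le (hF.trans (le_self_add.trans le_order_mul)))
  obtain ⟨q, rfl⟩ := Nat.exists_eq_add_of_le hnk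
  have hF_eq : F.order = n :=
    le_antisymm (not_lt.mp fun h => hFn (homogeneousComponent_of_lt_order_eq_zero h)) hF
  have hH : q ≤ H.order := by
    rw [order_mul, hF_eq, Nat.cast_add] at hG
    exact (ENat.add_le_add_iff_left (ENat.natCast_ne_top n)).mp hG
  refine ⟨homogeneousComponent q H, ?_, homogeneousComponent_mul_of_le_order hF hH⟩
  rw [Nat.add_sub_cancel_left]
  exact isHomogeneous_homogeneousComponent H q

end MvPowerSeries

open MvPowerSeries in
theorem stmt_15_general (m : ℕ) (ω : Fin 3 → MvPolynomial (Fin 3) ℂ)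
    (hhom : ∀ i, (ω i).IsHomogeneous m)
    (f : MvPowerSeries (Fin 3) ℂ) (n : ℕ) (fn : MvPolynomial (Fin 3) ℂ)
    (hfn : fn.IsHomogeneous n) (hfn0 : fn ≠ 0)
    (hlow : ∀ s : Fin 3 →₀ ℕ, (s.sum fun _ e => e) < n → MvPowerSeries.coeff s f = 0)
    (hpart : ∀ s : Fin 3 →₀ ℕ, (s.sum fun _ e => e) = n →
      MvPowerSeries.coeff s f = MvPolynomial.coeff s fn)
    (hdvd : ∀ i j : Fin 3,
      f ∣ ((ω i : MvPowerSeries (Fin 3) ℂ) * mvpsPDeriv j f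
            - (ω j : MvPowerSeries (Fin 3) ℂ) * mvpsPDeriv i f)) :
    ∀ i j : Fin 3, fn ∣ (ω i * pderiv j fn - ω j * pderiv i fn) := by
  intro i j
  rcases n with _ | n
  · obtain ⟨c, rfl⟩ : ∃ c, fn = MvPolynomial.C c :=
      ⟨_, totalDegree_eq_zero_iff_eq_C.mp (hfn.totalDegree hfn0)⟩
    simp
  have hf : ((n + 1 : ℕ) : ℕ∞) ≤ f.order := nat_le_order hlow
  have hfn_eq : homogeneousComponent (n + 1) f = fn := by
    ext d
    rw [MvPowerSeries.coeff_homogeneousComponent, MvPolynomial.coeff_coe]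
    split_ifs with hd
    · exact hpart d hd
    · exact (hfn.coeff_eq_zero hd).symm
  have hG := le_order_sub (le_order_coe_mul_pderiv (hhom i) hf j)
    (le_order_coe_mul_pderiv (hhom j) hf i)
  simp only [mvpsPDeriv_eq_pderiv] at hdvd
  obtain ⟨H, hH, hGH⟩ := exists_isHomogeneous_homogeneousComponent_eq_mul_of_dvd (hdvd i j) hf
    (by rwa [hfn_eq, Ne, MvPolynomial.coe_eq_zero_iff]) hG
  rw [map_sub, homogeneousComponent_coe_mul_pderiv (hhom i) hf,
    homogeneousComponent_coe_mul_pderiv (hhom j) hf, hfn_eq, MvPowerSeries.pderiv_coe,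
    MvPowerSeries.pderiv_coe, ← coe_truncTotal_of_isHomogeneous hH] at hGH
  simp only [← MvPolynomial.coeToMvPowerSeries.ringHom_apply, ← map_mul, ← map_sub] at hGH
  exact ⟨_, MvPolynomial.coe_inj.mp hGH⟩

/-- Let `ω = ω₁ dx + ω₂ dy + ω₃ dz` be an algebraic Pfaff form of degree `m` on
`ℙ²_ℂ`: the `ωᵢ` are homogeneous of degree `m` and `xω₁ + yω₂ + zω₃ = 0`.
If `f ∈ ℂ[[x,y,z]]` is nonzero with lowest-degree homogeneous part `fn` (of
degree `n`), and `f` divides `ω ∧ df` (componentwise), then `fn` divides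
`ω ∧ d fn`: the class of `fn` is an algebraic solution of `ω`. -/
theorem stmt_15 (m : ℕ) (ω : Fin 3 → MvPolynomial (Fin 3) ℂ)
    (hhom : ∀ i, (ω i).IsHomogeneous m)
    (hEuler : (X 0 * ω 0 + X 1 * ω 1 + X 2 * ω 2 : MvPolynomial (Fin 3) ℂ) = 0)
    (f : MvPowerSeries (Fin 3) ℂ) (n : ℕ) (fn : MvPolynomial (Fin 3) ℂ)
    (hfn : fn.IsHomogeneous n) (hfn0 : fn ≠ 0)
    (hlow : ∀ s : Fin 3 →₀ ℕ, (s.sum fun _ e => e) < n → MvPowerSeries.coeff s f = 0)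
    (hpart : ∀ s : Fin 3 →₀ ℕ, (s.sum fun _ e => e) = n →
      MvPowerSeries.coeff s f = MvPolynomial.coeff s fn)
    (hdvd : ∀ i j : Fin 3,
      f ∣ ((ω i : MvPowerSeries (Fin 3) ℂ) * mvpsPDeriv j f
            - (ω j : MvPowerSeries (Fin 3) ℂ) * mvpsPDeriv i f)) :
    ∀ i j : Fin 3, fn ∣ (ω i * pderiv j fn - ω j * pderiv i fn) :=
  stmt_15_general m ω hhom f n fn hfn hfn0 hlow hpart hdvd
end
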